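/- For unit vectors d₀, d with d₀·d ≠ -1 and any ψ ∈ ℝ, the identity exp(ψ d̂) χ[d₀,d] = χ[d₀,d] exp(ψ d̂₀) holds, where χ[d₀,d] is the drill-free rotation mapping d₀ to d. -/

import Mathlib

/-! `χ[d₀,d]` intertwines the two cross products, `d × χ v = χ (d₀ × v)`, i.e. `χ d̂₀ = d̂ χ`.
Hence `χ` semiconjugates `ψ d̂₀` to `ψ d̂`, and therefore every power series in them, in particular
their exponentials. The intertwining identity follows from the triple-product expansions once one
knows `(d + d₀) × (d₀ × d) = (1 + d₀·d) (d₀ - d)`, which is where `|d₀| = |d| = 1` enters. -/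

open Matrix Real

noncomputable def skewM (w : Fin 3 → ℝ) : Matrix (Fin 3) (Fin 3) ℝ :=
  !![0, -w 2, w 1; w 2, 0, -w 0; -w 1, w 0, 0]

noncomputable def chiR (d₀ d : Fin 3 → ℝ) : Matrix (Fin 3) (Fin 3) ℝ :=
  (d₀ ⬝ᵥ d) • (1 : Matrix (Fin 3) (Fin 3) ℝ) + skewM (d₀ ⨯₃ d)
    + (1 / (1 + d₀ ⬝ᵥ d)) • vecMulVec (d₀ ⨯₃ d) (d₀ ⨯₃ d)

noncomputable def nrm (w : Fin 3 → ℝ) : ℝ := Real.sqrt (w ⬝ᵥ w)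

theorem SemiconjBy.matrix_exp_right {m 𝕂 : Type*} [Fintype m] [DecidableEq m] [RCLike 𝕂]
    {U A B : Matrix m m 𝕂} (h : SemiconjBy U A B) :
    SemiconjBy U (NormedSpace.exp A) (NormedSpace.exp B) := by
  open scoped Norms.Operator in exact h.exp_right

theorem skewM_mulVec (w v : Fin 3 → ℝ) : skewM w *ᵥ v = w ⨯₃ v := by
  ext i
  fin_cases i <;> simp [skewM, cross_apply, mulVec, dotProduct, Fin.sum_univ_three] <;> ring

theorem chiR_mulVec (d₀ d v : Fin 3 → ℝ) :
    chiR d₀ d *ᵥ v = (d₀ ⬝ᵥ d) • v + (d₀ ⨯₃ d) ⨯₃ v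
      + (1 / (1 + d₀ ⬝ᵥ d) * ((d₀ ⨯₃ d) ⬝ᵥ v)) • (d₀ ⨯₃ d) := by
  simp only [chiR, add_mulVec, smul_mulVec, one_mulVec, skewM_mulVec, vecMulVec_mulVec,
    op_smul_eq_smul, smul_smul]

theorem add_cross_cross_eq_smul_sub {d₀ d : Fin 3 → ℝ} (h₀ : d₀ ⬝ᵥ d₀ = 1) (h₁ : d ⬝ᵥ d = 1) :
    (d + d₀) ⨯₃ (d₀ ⨯₃ d) = (1 + d₀ ⬝ᵥ d) • (d₀ - d) := by
  rw [map_add, LinearMap.add_apply, cross_cross_eq_smul_sub_smul',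
    cross_cross_eq_smul_sub_smul', h₁, h₀]
  module

theorem cross_chiR_mulVec {d₀ d : Fin 3 → ℝ} (h₀ : d₀ ⬝ᵥ d₀ = 1) (h₁ : d ⬝ᵥ d = 1)
    (h : d₀ ⬝ᵥ d ≠ -1) (v : Fin 3 → ℝ) :
    d ⨯₃ (chiR d₀ d *ᵥ v) = chiR d₀ d *ᵥ (d₀ ⨯₃ v) := by
  have hk : 1 / (1 + d₀ ⬝ᵥ d) * (1 + d₀ ⬝ᵥ d) = 1 :=
    one_div_mul_cancel fun h' => h (by linarith)
  have hwd : (d₀ ⨯₃ d) ⬝ᵥ d = 0 := by rw [dotProduct_comm, dot_cross_self]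
  have key : (1 + d₀ ⬝ᵥ d) • ((d₀ - d) ⨯₃ v) =
      ((d + d₀) ⬝ᵥ v) • (d₀ ⨯₃ d) - ((d₀ ⨯₃ d) ⬝ᵥ v) • (d + d₀) := by
    rw [← LinearMap.smul_apply, ← map_smul, ← add_cross_cross_eq_smul_sub h₀ h₁,
      cross_cross_eq_smul_sub_smul]
  rw [chiR_mulVec, chiR_mulVec]
  simp only [map_add, map_smul, map_sub, LinearMap.sub_apply, cross_cross_eq_smul_sub_smul',
    cross_dot_cross, dot_self_cross, hwd, h₀, h₁, add_dotProduct, dotProduct_comm d d₀] at key ⊢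
  -- the two sides differ by `(d₀·d)/(1 + d₀·d)` times `key`, up to multiples of `hk`
  linear_combination (norm := module) -(1 / (1 + d₀ ⬝ᵥ d) * (d₀ ⬝ᵥ d)) • key
    - hk • ((d₀ ⬝ᵥ d) • (d ⨯₃ v - d₀ ⨯₃ v) + (d ⬝ᵥ v) • (d₀ ⨯₃ d) - ((d₀ ⨯₃ d) ⬝ᵥ v) • d₀)

theorem semiconjBy_chiR_skewM {d₀ d : Fin 3 → ℝ} (h₀ : d₀ ⬝ᵥ d₀ = 1) (h₁ : d ⬝ᵥ d = 1)
    (h : d₀ ⬝ᵥ d ≠ -1) : SemiconjBy (chiR d₀ d) (skewM d₀) (skewM d) := by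
  refine ext_iff_mulVec.2 fun v => ?_
  rw [← mulVec_mulVec, ← mulVec_mulVec, skewM_mulVec, skewM_mulVec, cross_chiR_mulVec h₀ h₁ h]

theorem exp_spin_chi_commutation (d₀ d : Fin 3 → ℝ) (h₀ : d₀ ⬝ᵥ d₀ = 1)
    (h₁ : d ⬝ᵥ d = 1) (h : d₀ ⬝ᵥ d ≠ -1) (ψ : ℝ) :
    NormedSpace.exp (ψ • skewM d) * chiR d₀ d
      = chiR d₀ d * NormedSpace.exp (ψ • skewM d₀) :=
  ((semiconjBy_chiR_skewM h₀ h₁ h).smul_right ψ).matrix_exp_right.eq.symm
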